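/- Let G be a finite additive abelian group of cardinality N, let A ⊆ G, and let η > 0. Suppose that for every nontrivial additive character γ of G (i.e., every group homomorphism γ from G to the nonzero complex numbers that is not identically 1) one has |∑_{x ∈ A} γ(−x)| ≤ N^(1−η). Then for every S ⊆ G, | #{(x, x') ∈ S × S : x + x' ∈ A} − |A|·|S|²/N | ≤ N^(1−η)·|S|. -/

import Mathlib

open Finset

/-!
Count solutions with characters: `N · #{(x, x') ∈ S × S | x + x' ∈ A} = ∑_γ Ŝ(γ)² Â(γ)`, where
`Ŝ(γ) = ∑_{x ∈ S} γ x` and `Â(γ) = ∑_{a ∈ A} γ (-a)`. The trivial character contributes the main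
term `|A| |S|²`; every other term is at most `N^(1-η) |Ŝ(γ)|²`, and `∑_γ |Ŝ(γ)|² = N |S|` by
Parseval.
-/

section CharacterSums

variable {G : Type*} [AddCommGroup G] [Fintype G] [DecidableEq G]

lemma sum_addChar_sum_apply {ι : Type*} (s : Finset ι) (g : ι → G) :
    ∑ ψ : AddChar G ℂ, ∑ i ∈ s, ψ (g i) = Fintype.card G * #{i ∈ s | g i = 0} := by
  rw [sum_comm]
  simp only [AddChar.sum_apply_eq_ite, sum_ite, sum_const_zero, add_zero, sum_const, nsmul_eq_mul,
    mul_comm]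

lemma sum_addChar_norm_sum_apply_sq (S : Finset G) :
    ∑ ψ : AddChar G ℂ, ‖∑ x ∈ S, ψ x‖ ^ 2 = Fintype.card G * #S := by
  have hsq (ψ : AddChar G ℂ) :
      (‖∑ x ∈ S, ψ x‖ ^ 2 : ℂ) = ∑ p ∈ S ×ˢ S, ψ (p.1 - p.2) := by
    simp only [← Complex.mul_conj', map_sum, ← AddChar.map_neg_eq_conj, sum_mul_sum,
      sub_eq_add_neg, AddChar.map_add_eq_mul, sum_product]
  have := sum_addChar_sum_apply (S ×ˢ S) fun p => p.1 - p.2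
  simp only [← hsq, sub_eq_zero] at this
  rw [← diag_card S, diag_eq_filter]
  exact_mod_cast this

lemma sum_addChar_sum_mul_sum_mul_sum_neg (S T A : Finset G) :
    ∑ ψ : AddChar G ℂ, (∑ x ∈ S, ψ x) * (∑ y ∈ T, ψ y) * ∑ a ∈ A, ψ (-a) =
      Fintype.card G * #{p ∈ S ×ˢ T | p.1 + p.2 ∈ A} := by
  have hprod (ψ : AddChar G ℂ) : (∑ x ∈ S, ψ x) * (∑ y ∈ T, ψ y) * ∑ a ∈ A, ψ (-a) =
      ∑ q ∈ (S ×ˢ T) ×ˢ A, ψ (q.1.1 + q.1.2 - q.2) := by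
    rw [sum_mul_sum]
    simp only [sum_mul]
    simp only [mul_sum, sum_product, sub_eq_add_neg, AddChar.map_add_eq_mul]
  have hcount : #{q ∈ (S ×ˢ T) ×ˢ A | q.1.1 + q.1.2 - q.2 = 0} =
      #{p ∈ S ×ˢ T | p.1 + p.2 ∈ A} := by
    simp only [card_filter, sum_product (S ×ˢ T) A, sub_eq_zero, sum_ite_eq]
  rw [← hcount, ← sum_addChar_sum_apply]
  exact sum_congr rfl fun ψ _ => hprod ψ

lemma card_mul_card_filter_add_mem_sub_eq_sum_ne_zero (S A : Finset G) :
    ((Fintype.card G * #{p ∈ S ×ˢ S | p.1 + p.2 ∈ A} - #A * #S ^ 2 : ℝ) : ℂ) =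
      ∑ ψ ∈ univ.erase (0 : AddChar G ℂ), (∑ x ∈ S, ψ x) * (∑ y ∈ S, ψ y) * ∑ a ∈ A, ψ (-a) := by
  have h := sum_erase_add univ
    (fun ψ : AddChar G ℂ => (∑ x ∈ S, ψ x) * (∑ y ∈ S, ψ y) * ∑ a ∈ A, ψ (-a)) (mem_univ 0)
  rw [sum_addChar_sum_mul_sum_mul_sum_neg] at h
  simp only [AddChar.zero_apply, sum_const, nsmul_one] at h
  push_cast
  linear_combination -h

lemma abs_card_filter_add_mem_sub_le (S A : Finset G) {K : ℝ} (hK : 0 ≤ K)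
    (hA : ∀ ψ : AddChar G ℂ, ψ ≠ 0 → ‖∑ a ∈ A, ψ (-a)‖ ≤ K) :
    |(#{p ∈ S ×ˢ S | p.1 + p.2 ∈ A} : ℝ) - #A * #S ^ 2 / Fintype.card G| ≤ K * #S := by
  have hN : (0 : ℝ) < Fintype.card G := by exact_mod_cast Fintype.card_pos
  rw [← mul_le_mul_iff_of_pos_left hN, ← abs_of_pos hN, ← abs_mul, abs_of_pos hN, mul_sub,
    mul_div_cancel₀ _ hN.ne']
  calc _ ≤ ∑ ψ ∈ univ.erase (0 : AddChar G ℂ),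
          ‖(∑ x ∈ S, ψ x) * (∑ y ∈ S, ψ y) * ∑ a ∈ A, ψ (-a)‖ := by
        rw [← Real.norm_eq_abs, ← Complex.norm_real,
          card_mul_card_filter_add_mem_sub_eq_sum_ne_zero]
        exact norm_sum_le _ _
    _ ≤ ∑ ψ ∈ univ.erase (0 : AddChar G ℂ), K * ‖∑ x ∈ S, ψ x‖ ^ 2 := by
      refine sum_le_sum fun ψ hψ => ?_
      rw [norm_mul, norm_mul, ← sq, mul_comm]
      exact mul_le_mul_of_nonneg_right (hA ψ (ne_of_mem_erase hψ)) (by positivity)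
    _ ≤ ∑ ψ : AddChar G ℂ, K * ‖∑ x ∈ S, ψ x‖ ^ 2 :=
      sum_le_sum_of_subset_of_nonneg (subset_univ _) fun _ _ _ => by positivity
    _ = Fintype.card G * (K * #S) := by
      rw [← mul_sum, sum_addChar_norm_sum_apply_sq]
      ring

end CharacterSums

theorem pseudorandom_sum_count {G : Type*} [AddCommGroup G] [Fintype G] [DecidableEq G]
    (N : ℕ) (hN : Fintype.card G = N) (A : Finset G) (η : ℝ)
    (hA : ∀ γ : AddChar G ℂ, (¬ ∀ x : G, γ x = 1) →
      ‖∑ x ∈ A, γ (-x)‖ ≤ (N : ℝ) ^ ((1 : ℝ) - η)) :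
    ∀ S : Finset G,
      |(((S ×ˢ S).filter fun p => p.1 + p.2 ∈ A).card : ℝ) -
          (A.card : ℝ) * (S.card : ℝ) ^ 2 / (N : ℝ)| ≤
        (N : ℝ) ^ ((1 : ℝ) - η) * (S.card : ℝ) := by
  intro S
  subst hN
  exact abs_card_filter_add_mem_sub_le S A (by positivity) fun ψ hψ =>
    hA ψ (mt AddChar.eq_zero_iff.2 hψ)
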